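/- arXiv:1411.5616 — 2 statements merged into one kernel-verified Lean document; each statement's English description precedes it below -/
import Mathlib

section
/- Let 0 < α, β ≤ 1 and define G(t,s) = u(t,s) for t ≤ s and G(t,s) = u(s,t) for s ≤ t, where u(t,s) = (t^α/(αβ(α+β)(2α+β)))[2α s^α(1 − s^β) − β(1 − s^α)(t^{α+β} + s^{α+β})]. Then G(t,s) > 0 for all t, s ∈ (0,1), and G is symmetric: G(t,s) = G(s,t). -/
/-!
For `t ≤ s` one has `t ^ (α + β) + s ^ (α + β) ≤ 2 s ^ α s ^ β`, so positivity of `u t s` reduces to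
`β s ^ β (1 - s ^ α) < α (1 - s ^ β)` on `(0, 1)`. Writing `L = -log s > 0`, this follows from
`1 - s ^ α ≤ α L` and `β L s ^ β < 1 - s ^ β`, both instances of `1 + x ≤ exp x`.
Symmetry holds because `G t s = u (min t s) (max t s)`.
-/

open Real

lemma ite_le_eq_min_max {ι κ : Type*} [LinearOrder ι] (f : ι → ι → κ) (t s : ι) :
    (if t ≤ s then f t s else f s t) = f (min t s) (max t s) := by
  split_ifs with h
  · rw [min_eq_left h, max_eq_right h]
  · rw [min_eq_right (le_of_not_ge h), max_eq_left (le_of_not_ge h)]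

namespace Real

lemma one_sub_rpow_le_mul_neg_log {s : ℝ} (hs : 0 < s) (γ : ℝ) : 1 - s ^ γ ≤ γ * -log s := by
  have := add_one_le_exp (γ * log s)
  rw [rpow_def_of_pos hs, mul_comm (log s)]
  linarith

lemma mul_neg_log_mul_rpow_lt_one_sub_rpow {s γ : ℝ} (hs : 0 < s) (hs1 : s < 1) (hγ : 0 < γ) :
    γ * -log s * s ^ γ < 1 - s ^ γ := by
  have hx : γ * log s ≠ 0 := (mul_neg_of_pos_of_neg hγ (log_neg hs hs1)).ne
  have hlt : (1 - γ * log s) * exp (γ * log s) < exp (-(γ * log s)) * exp (γ * log s) :=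
    mul_lt_mul_of_pos_right (one_sub_lt_exp_neg hx) (exp_pos _)
  rw [← exp_add, neg_add_cancel, exp_zero] at hlt
  rw [rpow_def_of_pos hs, mul_comm (log s)]
  linarith

end Real

lemma mul_rpow_mul_one_sub_rpow_lt {α β s : ℝ} (hα : 0 < α) (hβ : 0 < β) (hs : 0 < s)
    (hs1 : s < 1) : β * s ^ β * (1 - s ^ α) < α * (1 - s ^ β) :=
  calc β * s ^ β * (1 - s ^ α)
      ≤ β * s ^ β * (α * -log s) := by
        gcongr
        exact one_sub_rpow_le_mul_neg_log hs α
    _ = α * (β * -log s * s ^ β) := by ring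
    _ < α * (1 - s ^ β) := by
        gcongr
        exact mul_neg_log_mul_rpow_lt_one_sub_rpow hs hs1 hβ

lemma lidstone_factor_pos {α β t s : ℝ} (hα : 0 < α) (hβ : 0 < β) (ht : 0 < t) (hts : t ≤ s)
    (hs1 : s < 1) :
    0 < 2 * α * s ^ α * (1 - s ^ β) - β * (1 - s ^ α) * (t ^ (α + β) + s ^ (α + β)) := by
  have hs : 0 < s := ht.trans_le hts
  have hsα1 : s ^ α ≤ 1 := rpow_le_one hs.le hs1.le hα.le
  have hsum : t ^ (α + β) + s ^ (α + β) ≤ 2 * (s ^ α * s ^ β) := by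
    have := rpow_le_rpow ht.le hts (add_pos hα hβ).le
    rw [rpow_add hs] at this ⊢
    linarith
  rw [sub_pos]
  calc β * (1 - s ^ α) * (t ^ (α + β) + s ^ (α + β))
      ≤ β * (1 - s ^ α) * (2 * (s ^ α * s ^ β)) := by gcongr
    _ = 2 * s ^ α * (β * s ^ β * (1 - s ^ α)) := by ring
    _ < 2 * s ^ α * (α * (1 - s ^ β)) :=
        mul_lt_mul_of_pos_left (mul_rpow_mul_one_sub_rpow_lt hα hβ hs hs1) (by positivity)
    _ = 2 * α * s ^ α * (1 - s ^ β) := by ring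

theorem lidstone_green_pos_symm_general (α β : ℝ) (hα : 0 < α)
    (hβ : 0 < β)
    (u G : ℝ → ℝ → ℝ)
    (hu : ∀ t s, u t s =
      (t ^ α / (α * β * (α + β) * (2 * α + β))) *
        (2 * α * s ^ α * (1 - s ^ β) -
          β * (1 - s ^ α) * (t ^ (α + β) + s ^ (α + β))))
    (hG : ∀ t s, G t s = if t ≤ s then u t s else u s t) :
    (∀ t ∈ Set.Ioo (0:ℝ) 1, ∀ s ∈ Set.Ioo (0:ℝ) 1, 0 < G t s) ∧
    (∀ t s : ℝ, G t s = G s t) := by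
  have hG' (t s : ℝ) : G t s = u (min t s) (max t s) := (hG t s).trans (ite_le_eq_min_max u t s)
  refine ⟨fun t ht s hs => ?_, fun t s => by rw [hG', hG', min_comm, max_comm]⟩
  have hmin : 0 < min t s := lt_min ht.1 hs.1
  rw [hG', hu]
  exact mul_pos (by positivity)
    (lidstone_factor_pos hα hβ hmin min_le_max (max_lt ht.2 hs.2))

theorem lidstone_green_pos_symm (α β : ℝ) (hα : 0 < α) (hα1 : α ≤ 1)
    (hβ : 0 < β) (hβ1 : β ≤ 1)
    (u G : ℝ → ℝ → ℝ)
    (hu : ∀ t s, u t s =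
      (t ^ α / (α * β * (α + β) * (2 * α + β))) *
        (2 * α * s ^ α * (1 - s ^ β) -
          β * (1 - s ^ α) * (t ^ (α + β) + s ^ (α + β))))
    (hG : ∀ t s, G t s = if t ≤ s then u t s else u s t) :
    (∀ t ∈ Set.Ioo (0:ℝ) 1, ∀ s ∈ Set.Ioo (0:ℝ) 1, 0 < G t s) ∧
    (∀ t s : ℝ, G t s = G s t) :=
  lidstone_green_pos_symm_general α β hα hβ u G hu hG
end

section
/- Let 0 < α, β ≤ 1, η ∈ (0,1), δ > 0 with 0 < δη^α < 1, and let h : [0,1] → ℝ be continuous. Define x(t) := −(1/α)∫₀^t (t^α − s^α)h(s)s^{β−1}ds − (δ t^α/(α(1 − δη^α)))∫₀^η (η^α − s^α)h(s)s^{β−1}ds + (t^α/(α(1 − δη^α)))∫₀¹ (1 − s^α)h(s)s^{β−1}ds. Then x(0) = 0, δx(η) = x(1), and for t ∈ (0,1), t^{1−β}·d/dt( t^{1−α} x'(t) ) = −h(t). -/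
/-!
Writing `A(t) = ∫₀ᵗ h(s) s^{β-1} ds`, the kernel `(t^α - s^α)` splits the first integral as
`t^α A(t) - ∫₀ᵗ s^α h(s) s^{β-1} ds`, whose derivative is `α t^{α-1} A(t)` because the two
boundary terms cancel. Hence `t^{1-α} x'(t) = c - A(t)` for a constant `c`, and applying
`t^{1-β} d/dt` gives `-h(t)`. The boundary conditions are pure algebra, since `0^α = 0`.
-/

open Real MeasureTheory intervalIntegral Set Filter Topology

noncomputable def conformableDeriv (γ : ℝ) (f : ℝ → ℝ) (t : ℝ) : ℝ := t ^ (1 - γ) * deriv f t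

lemma rpow_one_sub_mul_rpow_sub_one {t : ℝ} (ht : 0 < t) (γ : ℝ) :
    t ^ (1 - γ) * t ^ (γ - 1) = 1 := by
  rw [← rpow_add ht]
  simp

lemma conformableDeriv_eq_of_hasDerivAt {γ t F : ℝ} {f : ℝ → ℝ} (ht : 0 < t)
    (hf : HasDerivAt f (t ^ (γ - 1) * F) t) : conformableDeriv γ f t = F := by
  rw [conformableDeriv, hf.deriv, ← mul_assoc, rpow_one_sub_mul_rpow_sub_one ht, one_mul]

lemma Filter.EventuallyEq.conformableDeriv_eq {γ t : ℝ} {f g : ℝ → ℝ} (hfg : f =ᶠ[𝓝 t] g) :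
    conformableDeriv γ f t = conformableDeriv γ g t := by
  rw [conformableDeriv, conformableDeriv, hfg.deriv_eq]

section WeightedIntegral

variable {β : ℝ} {f p : ℝ → ℝ}

lemma intervalIntegrable_mul_rpow_sub_one (hβ : 0 < β) {a : ℝ}
    (hf : ContinuousOn f (uIcc 0 a)) :
    IntervalIntegrable (fun s => f s * s ^ (β - 1)) volume 0 a :=
  (intervalIntegrable_rpow' (by linarith)).continuousOn_mul hf

lemma hasDerivAt_integral_mul_rpow_sub_one (hβ : 0 < β) {b t : ℝ}
    (hf : ContinuousOn f (Icc 0 b)) (ht : t ∈ Ioo 0 b) :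
    HasDerivAt (fun τ => ∫ s in 0..τ, f s * s ^ (β - 1)) (f t * t ^ (β - 1)) t := by
  have hcont : ContinuousOn (fun s => f s * s ^ (β - 1)) (Ioo 0 b) :=
    (hf.mono Ioo_subset_Icc_self).fun_mul fun s hs =>
      (continuousAt_rpow_const s _ (Or.inl hs.1.ne')).continuousWithinAt
  exact integral_hasDerivAt_right
    (intervalIntegrable_mul_rpow_sub_one hβ
      (hf.mono (uIcc_subset_Icc (left_mem_Icc.2 (ht.1.trans ht.2).le) ⟨ht.1.le, ht.2.le⟩)))
    (hcont.stronglyMeasurableAtFilter isOpen_Ioo t ht)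
    (hcont.continuousAt (isOpen_Ioo.mem_nhds ht))

lemma integral_sub_mul_mul_rpow_sub_one (hβ : 0 < β) {a : ℝ} (c : ℝ)
    (hp : ContinuousOn p (uIcc 0 a)) (hf : ContinuousOn f (uIcc 0 a)) :
    ∫ s in 0..a, (c - p s) * f s * s ^ (β - 1) =
      c * (∫ s in 0..a, f s * s ^ (β - 1)) - ∫ s in 0..a, p s * f s * s ^ (β - 1) := by
  rw [← intervalIntegral.integral_const_mul, ← intervalIntegral.integral_sub
    ((intervalIntegrable_mul_rpow_sub_one hβ hf).const_mul c)
    (intervalIntegrable_mul_rpow_sub_one hβ (hp.fun_mul hf))]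
  congr 1
  ext s
  ring

lemma hasDerivAt_integral_sub_mul_mul_rpow_sub_one (hβ : 0 < β) {b t p' : ℝ}
    (hp : ContinuousOn p (Icc 0 b)) (hp' : HasDerivAt p p' t)
    (hf : ContinuousOn f (Icc 0 b)) (ht : t ∈ Ioo 0 b) :
    HasDerivAt (fun τ => ∫ s in 0..τ, (p τ - p s) * f s * s ^ (β - 1))
      (p' * ∫ s in 0..t, f s * s ^ (β - 1)) t := by
  have hsplit : (fun τ => p τ * (∫ s in 0..τ, f s * s ^ (β - 1)) -
      ∫ s in 0..τ, p s * f s * s ^ (β - 1)) =ᶠ[𝓝 t]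
      fun τ => ∫ s in 0..τ, (p τ - p s) * f s * s ^ (β - 1) := by
    filter_upwards [isOpen_Ioo.mem_nhds ht] with τ hτ
    have hsub : uIcc 0 τ ⊆ Icc 0 b :=
      uIcc_subset_Icc (left_mem_Icc.2 (hτ.1.trans hτ.2).le) ⟨hτ.1.le, hτ.2.le⟩
    rw [integral_sub_mul_mul_rpow_sub_one hβ _ (hp.mono hsub) (hf.mono hsub)]
  refine (((hp'.mul (hasDerivAt_integral_mul_rpow_sub_one hβ hf ht)).sub
    (hasDerivAt_integral_mul_rpow_sub_one hβ (hp.fun_mul hf) ht)).congr_of_eventuallyEq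
      hsplit.symm).congr_deriv ?_
  ring

end WeightedIntegral

theorem three_point_bvp_solution_general (α β η δ : ℝ) (hα : 0 < α)
    (hβ : 0 < β)
    (hδη : δ * η ^ α < 1)
    (h : ℝ → ℝ) (hcont : ContinuousOn h (Set.Icc 0 1))
    (x : ℝ → ℝ)
    (hx : ∀ t, x t =
      -(1 / α) * (∫ s in (0:ℝ)..t, (t ^ α - s ^ α) * h s * s ^ (β - 1)) -
      (δ * t ^ α / (α * (1 - δ * η ^ α))) *
        (∫ s in (0:ℝ)..η, (η ^ α - s ^ α) * h s * s ^ (β - 1)) +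
      (t ^ α / (α * (1 - δ * η ^ α))) *
        (∫ s in (0:ℝ)..1, (1 - s ^ α) * h s * s ^ (β - 1))) :
    x 0 = 0 ∧ δ * x η = x 1 ∧
    ∀ t ∈ Set.Ioo (0:ℝ) 1,
      t ^ (1 - β) * deriv (fun τ => τ ^ (1 - α) * deriv x τ) t = -h t := by
  have hD : 1 - δ * η ^ α ≠ 0 := by linarith
  set Iη := ∫ s in (0:ℝ)..η, (η ^ α - s ^ α) * h s * s ^ (β - 1) with hIη
  set I1 := ∫ s in (0:ℝ)..1, (1 - s ^ α) * h s * s ^ (β - 1) with hI1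
  set A := fun τ => ∫ s in (0:ℝ)..τ, h s * s ^ (β - 1)
  have hpow : ContinuousOn (fun s : ℝ => s ^ α) (Icc 0 1) :=
    (continuous_id.rpow_const fun _ => Or.inr hα.le).continuousOn
  have hx' : ∀ τ ∈ Ioo (0:ℝ) 1,
      HasDerivAt x (τ ^ (α - 1) * ((I1 - δ * Iη) / (1 - δ * η ^ α) - A τ)) τ := by
    intro τ hτ
    have hpow' : HasDerivAt (fun s : ℝ => s ^ α) (α * τ ^ (α - 1)) τ :=
      hasDerivAt_rpow_const (Or.inl hτ.1.ne')
    rw [show x = _ from funext hx]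
    refine ((((hasDerivAt_integral_sub_mul_mul_rpow_sub_one hβ hpow hpow' hcont hτ).const_mul
      (-(1 / α))).sub (((hpow'.const_mul δ).div_const _).mul_const Iη)).add
      ((hpow'.div_const _).mul_const I1)).congr_deriv ?_
    field_simp
    ring
  refine ⟨by simp [hx, zero_rpow hα.ne'], ?_, fun t ht => ?_⟩
  · rw [hx η, hx 1, ← hIη, one_rpow, ← hI1]
    field_simp
    ring
  have hDα : conformableDeriv α x =ᶠ[𝓝 t]
      fun τ => (I1 - δ * Iη) / (1 - δ * η ^ α) - A τ := by
    filter_upwards [isOpen_Ioo.mem_nhds ht] with τ hτ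
    exact conformableDeriv_eq_of_hasDerivAt hτ.1 (hx' τ hτ)
  show conformableDeriv β (conformableDeriv α x) t = -h t
  rw [hDα.conformableDeriv_eq]
  exact conformableDeriv_eq_of_hasDerivAt ht.1
    (((hasDerivAt_integral_mul_rpow_sub_one hβ hcont ht).const_sub _).congr_deriv (by ring))

theorem three_point_bvp_solution (α β η δ : ℝ) (hα : 0 < α) (hα1 : α ≤ 1)
    (hβ : 0 < β) (hβ1 : β ≤ 1) (hη0 : 0 < η) (hη1 : η < 1) (hδ : 0 < δ)
    (hδη : δ * η ^ α < 1)
    (h : ℝ → ℝ) (hcont : ContinuousOn h (Set.Icc 0 1))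
    (x : ℝ → ℝ)
    (hx : ∀ t, x t =
      -(1 / α) * (∫ s in (0:ℝ)..t, (t ^ α - s ^ α) * h s * s ^ (β - 1)) -
      (δ * t ^ α / (α * (1 - δ * η ^ α))) *
        (∫ s in (0:ℝ)..η, (η ^ α - s ^ α) * h s * s ^ (β - 1)) +
      (t ^ α / (α * (1 - δ * η ^ α))) *
        (∫ s in (0:ℝ)..1, (1 - s ^ α) * h s * s ^ (β - 1))) :
    x 0 = 0 ∧ δ * x η = x 1 ∧
    ∀ t ∈ Set.Ioo (0:ℝ) 1,
      t ^ (1 - β) * deriv (fun τ => τ ^ (1 - α) * deriv x τ) t = -h t :=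
  three_point_bvp_solution_general α β η δ hα hβ hδη h hcont x hx
end
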